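/- The syllable TH has infinite order in PSU(2): for every positive integer n, the matrix (T·H)^n is not a unit-modulus complex scalar multiple of the 2×2 identity matrix. -/

import Mathlib

open Matrix Complex

noncomputable section

/-- The Hadamard gate. -/
noncomputable def Hm : Matrix (Fin 2) (Fin 2) ℂ :=
  (Complex.I / (Real.sqrt 2 : ℂ)) • !![1, 1; 1, -1]

/-- The T gate. -/
noncomputable def Tm : Matrix (Fin 2) (Fin 2) ℂ :=
  !![Complex.exp (-(Real.pi / 8 : ℂ) * Complex.I), 0;
     0, Complex.exp ((Real.pi / 8 : ℂ) * Complex.I)]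

/-- The phase gate `S = T²`. -/
noncomputable def Sm : Matrix (Fin 2) (Fin 2) ℂ := Tm * Tm

/-- `A` equals `B` up to a unit-modulus scalar (global phase). -/
def UpToPhase (A B : Matrix (Fin 2) (Fin 2) ℂ) : Prop :=
  ∃ z : ℂ, ‖z‖ = 1 ∧ A = z • B

/-- Evaluation of a word over the alphabet {H, S}. -/
noncomputable def evalHS (w : List Bool) : Matrix (Fin 2) (Fin 2) ℂ :=
  (w.map (fun b => if b then Hm else Sm)).prod

/-- The Clifford group 𝒞: unitaries equal up to phase to a product of copies of H and S. -/
def Clifford (U : Matrix (Fin 2) (Fin 2) ℂ) : Prop :=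
  U ∈ Matrix.unitaryGroup (Fin 2) ℂ ∧ ∃ w : List Bool, UpToPhase U (evalHS w)

/-- The syllables TH and SH. -/
inductive Syl : Type
  | TH : Syl
  | SH : Syl
deriving DecidableEq

/-- Evaluation of a syllable. -/
noncomputable def evalSyl : Syl → Matrix (Fin 2) (Fin 2) ℂ
  | Syl.TH => Tm * Hm
  | Syl.SH => Sm * Hm

/-- Evaluation of a word over {TH, SH}. -/
noncomputable def evalWord (w : List Syl) : Matrix (Fin 2) (Fin 2) ℂ :=
  (w.map evalSyl).prod

/-- A word is normalized if it is empty, or it ends with TH and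
contains no two consecutive SH syllables. -/
def Normalized (w : List Syl) : Prop :=
  w = [] ∨ (w.getLast? = some Syl.TH ∧ ¬ ([Syl.SH, Syl.SH] <:+: w))

/-- A canonical word: normalized and no SH among its first four syllables. -/
def Canonical (w : List Syl) : Prop :=
  Normalized w ∧ Syl.SH ∉ w.take 4

/-- The T-count of a word: the number of TH syllables. -/
def Tcount (w : List Syl) : ℕ := w.count Syl.TH

/-- Trace distance between two matrices. -/
noncomputable def udist (U V : Matrix (Fin 2) (Fin 2) ℂ) : ℝ :=
  Real.sqrt ((2 - ‖(U * Vᴴ).trace‖) / 2)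

lemma cayley (A : Matrix (Fin 2) (Fin 2) ℂ) : A * A = A.trace • A - A.det • 1 := by
  ext i j
  fin_cases i <;> fin_cases j <;>
    simp [mul_apply, Fin.sum_univ_two, trace_fin_two, det_fin_two, one_apply] <;> ring

lemma sqrt2_sq : (Real.sqrt 2 : ℂ) * (Real.sqrt 2 : ℂ) = 2 := by
  rw [← Complex.ofReal_mul, Real.mul_self_sqrt (by norm_num : (0:ℝ) ≤ 2)]
  norm_num

lemma sqrt2_ne : (Real.sqrt 2 : ℂ) ≠ 0 := by
  simp only [ne_eq, Complex.ofReal_eq_zero]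
  positivity

lemma abstract_sq (s a b A B : ℂ) (hs : s * s = 2)
    (e1 : a * a = A) (e2 : b * b = B) (e3 : a * b = 1) (e4 : B + A = s) :
    (Complex.I / s * (a - b)) ^ 2 = 1 - s / 2 := by
  have hI2 : Complex.I ^ 2 = -1 := Complex.I_sq
  have h2 : (Complex.I / s * (a - b)) ^ 2 = (Complex.I * (a-b))^2 / s^2 := by ring
  rw [h2, show s^2 = 2 by rw [sq, hs]]
  linear_combination (-(1:ℂ)/2) * e1 + (-(1:ℂ)/2) * e2 + e3 +
    (-(1:ℂ)/2) * e4 + ((a-b)^2/2) * hI2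

lemma detN : (Tm * Hm).det = 1 := by
  rw [det_mul]
  rw [show Tm.det = 1 by
    simp [Tm, det_fin_two, ← Complex.exp_add]]
  rw [show Hm.det = 1 by
    simp only [Hm, det_smul, Fintype.card_fin, det_fin_two_of]
    rw [show ((1:ℂ) * -1 - 1 * 1) = -2 by ring, div_pow]
    rw [show ((Real.sqrt 2 : ℂ))^2 = 2 by rw [sq, sqrt2_sq], Complex.I_sq]
    norm_num]
  ring

lemma traceN_sq : (Tm * Hm).trace ^ 2 = 1 - (Real.sqrt 2 : ℂ) / 2 := by
  have h : (Tm * Hm).trace = Complex.I / (Real.sqrt 2 : ℂ) *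
      (Complex.exp (-(Real.pi / 8 : ℂ) * Complex.I) - Complex.exp ((Real.pi / 8 : ℂ) * Complex.I)) := by
    simp [Tm, Hm, trace_fin_two, mul_apply, Fin.sum_univ_two]
    ring
  rw [h]
  apply abstract_sq (Real.sqrt 2 : ℂ) _ _
    (Complex.exp (-((Real.pi / 4 : ℝ) : ℂ) * Complex.I))
    (Complex.exp (((Real.pi / 4 : ℝ) : ℂ) * Complex.I)) sqrt2_sq
  · rw [← Complex.exp_add]; push_cast; ring_nf
  · rw [← Complex.exp_add]; push_cast; ring_nf
  · rw [← Complex.exp_add]; ring_nf; exact Complex.exp_zero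
  · rw [Complex.exp_mul_I, show (-((Real.pi / 4 : ℝ) : ℂ) * Complex.I) = ((-(Real.pi / 4) : ℝ) : ℂ) * Complex.I by push_cast; ring,
      Complex.exp_mul_I]
    rw [← Complex.ofReal_cos, ← Complex.ofReal_sin, ← Complex.ofReal_cos, ← Complex.ofReal_sin]
    rw [Real.cos_pi_div_four, Real.sin_pi_div_four, Real.cos_neg, Real.sin_neg,
      Real.cos_pi_div_four, Real.sin_pi_div_four]
    push_cast
    ring

def PQ : ℕ → ℤ × ℤ
  | 0 => (2, 0)
  | 1 => (-2, -1)
  | (k+2) => (-2*(PQ (k+1)).1 - 2*(PQ (k+1)).2 - 4*(PQ k).1,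
              -(PQ (k+1)).1 - 2*(PQ (k+1)).2 - 4*(PQ k).2)

lemma PQ_rec (k : ℕ) : PQ (k+2) =
    (-2*(PQ (k+1)).1 - 2*(PQ (k+1)).2 - 4*(PQ k).1,
     -(PQ (k+1)).1 - 2*(PQ (k+1)).2 - 4*(PQ k).2) := rfl

lemma PQ_inv (m : ℕ) : ∃ a b c d : ℤ, Odd b ∧ Odd c ∧
    (PQ (2*m+1)).1 = 2^(m+1)*a ∧ (PQ (2*m+1)).2 = 2^m*b ∧
    (PQ (2*m+2)).1 = 2^(m+1)*c ∧ (PQ (2*m+2)).2 = 2^(m+1)*d := by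
  induction m with
  | zero =>
      refine ⟨-1, -1, -1, 2, ⟨-1, by ring⟩, ⟨-1, by ring⟩, ?_, ?_, ?_, ?_⟩ <;>
        simp [PQ_rec, PQ]
  | succ m ih =>
      obtain ⟨a, b, c, d, hb, hc, h1, h2, h3, h4⟩ := ih
      have e3 : 2*m+1+1 = 2*m+2 := by ring
      have e4 : 2*m+2+1 = 2*m+1+2 := by ring
      have r1 := PQ_rec (2*m+1)
      have r2 := PQ_rec (2*m+2)
      have p3 : (PQ (2*m+1+2)).1 = 2^(m+2) * (-c-d-2*a) := by
        rw [r1]; dsimp only; simp only [e3, h1, h2, h3, h4]; ring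
      have q3 : (PQ (2*m+1+2)).2 = 2^(m+1) * (-c-2*d-2*b) := by
        rw [r1]; dsimp only; simp only [e3, h1, h2, h3, h4]; ring
      have p4 : (PQ (2*m+2+2)).1 = 2^(m+2) * (-2*(-c-d-2*a)-(-c-2*d-2*b)-2*c) := by
        rw [r2]; dsimp only; simp only [e4, p3, q3, h3, h4]; ring
      have q4 : (PQ (2*m+2+2)).2 = 2^(m+2) * (-(-c-d-2*a)-(-c-2*d-2*b)-2*d) := by
        rw [r2]; dsimp only; simp only [e4, p3, q3, h3, h4]; ring
      have e1 : 2*(m+1)+1 = 2*m+1+2 := by ring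
      have e2 : 2*(m+1)+2 = 2*m+2+2 := by ring
      refine ⟨-c-d-2*a, -c-2*d-2*b, -2*(-c-d-2*a)-(-c-2*d-2*b)-2*c,
        -(-c-d-2*a)-(-c-2*d-2*b)-2*d, ?_, ?_, ?_, ?_, ?_, ?_⟩
      · rw [Int.odd_iff] at hc ⊢; omega
      · rw [Int.odd_iff] at hb hc ⊢; omega
      · rw [e1]; exact p3
      · rw [e1]; exact q3
      · rw [e2]; exact p4
      · rw [e2]; exact q4

lemma detK : ((Tm * Hm) * (Tm * Hm)).det = 1 := by
  rw [det_mul, detN]; ring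

lemma traceK : ((Tm * Hm) * (Tm * Hm)).trace = -1 - (Real.sqrt 2 : ℂ)/2 := by
  rw [cayley (Tm * Hm), trace_sub, trace_smul, trace_smul, trace_one, detN]
  rw [show (Tm*Hm).trace • (Tm*Hm).trace = (Tm*Hm).trace ^ 2 from by rw [smul_eq_mul, sq]]
  rw [traceN_sq]
  simp
  ring

lemma traceRec (k : ℕ) :
    (((Tm*Hm)*(Tm*Hm))^(k+2)).trace =
      (-1 - (Real.sqrt 2 : ℂ)/2) * (((Tm*Hm)*(Tm*Hm))^(k+1)).trace - (((Tm*Hm)*(Tm*Hm))^k).trace := by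
  set K := (Tm*Hm)*(Tm*Hm) with hK
  have h2 : K^(k+2) = ((-1 - (Real.sqrt 2 : ℂ)/2) • K^(k+1)) - K^k := by
    have : K^(k+2) = K^k * (K * K) := by rw [pow_add]; ring_nf; rw [sq]
    rw [this, cayley K, detK, traceK, one_smul, mul_sub, mul_smul_comm]
    rw [show K^k * K = K^(k+1) from by rw [pow_succ], mul_one]
  rw [h2, trace_sub, trace_smul, smul_eq_mul]

lemma bridge : ∀ k : ℕ, (2^k : ℂ) * (((Tm*Hm)*(Tm*Hm))^k).trace
    = ((PQ k).1 : ℂ) + ((PQ k).2 : ℂ) * (Real.sqrt 2 : ℂ) := by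
  have base0 : (2^0 : ℂ) * (((Tm*Hm)*(Tm*Hm))^0).trace = ((PQ 0).1 : ℂ) + ((PQ 0).2 : ℂ) * (Real.sqrt 2 : ℂ) := by
    simp [PQ, trace_one]
  have base1 : (2^1 : ℂ) * (((Tm*Hm)*(Tm*Hm))^1).trace = ((PQ 1).1 : ℂ) + ((PQ 1).2 : ℂ) * (Real.sqrt 2 : ℂ) := by
    rw [pow_one ((Tm*Hm)*(Tm*Hm)), traceK, pow_one]; simp [PQ]; ring
  have step : ∀ k, (2^k : ℂ) * (((Tm*Hm)*(Tm*Hm))^k).trace = ((PQ k).1 : ℂ) + ((PQ k).2 : ℂ) * (Real.sqrt 2 : ℂ) →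
      (2^(k+1) : ℂ) * (((Tm*Hm)*(Tm*Hm))^(k+1)).trace = ((PQ (k+1)).1 : ℂ) + ((PQ (k+1)).2 : ℂ) * (Real.sqrt 2 : ℂ) →
      (2^(k+2) : ℂ) * (((Tm*Hm)*(Tm*Hm))^(k+2)).trace = ((PQ (k+2)).1 : ℂ) + ((PQ (k+2)).2 : ℂ) * (Real.sqrt 2 : ℂ) := by
    intro k ih0 ih1
    rw [traceRec k, PQ_rec]
    dsimp only
    push_cast
    have hs := sqrt2_sq
    linear_combination (((-2:ℂ) - (Real.sqrt 2 : ℂ)) * ih1) + (-4:ℂ) * ih0 + (-((PQ (k+1)).2 : ℂ)) * hs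
  intro k
  induction k using Nat.twoStepInduction with
  | zero => exact base0
  | one => exact base1
  | more k ih0 ih1 => exact step k ih0 ih1

theorem TH_infinite_order (n : ℕ) (hn : 0 < n) :
    ¬ (∃ z : ℂ, ‖z‖ = 1 ∧ (Tm * Hm) ^ n = z • (1 : Matrix (Fin 2) (Fin 2) ℂ)) := by
  rintro ⟨z, hz, hzn⟩
  have hdet : z ^ 2 = 1 := by
    have h1 : ((Tm * Hm) ^ n).det = 1 := by rw [det_pow, detN, one_pow]
    rw [hzn, det_smul, Fintype.card_fin, det_one, mul_one] at h1
    exact h1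
  have hKn : ((Tm * Hm) * (Tm * Hm)) ^ n = 1 := by
    have hc : ((Tm * Hm) * (Tm * Hm)) ^ n = (Tm * Hm) ^ n * (Tm * Hm) ^ n :=
      (Commute.refl (Tm * Hm)).mul_pow n
    rw [hc, hzn, smul_mul_assoc, one_mul, smul_smul, ← sq, hdet, one_smul]
  have hb := bridge n
  rw [hKn, trace_one] at hb
  simp only [Fintype.card_fin, Nat.cast_ofNat] at hb
  have hreal : ((PQ n).1 : ℝ) + ((PQ n).2 : ℝ) * Real.sqrt 2 = 2 ^ (n + 1) := by
    have h2 : ((((PQ n).1 : ℝ) + ((PQ n).2 : ℝ) * Real.sqrt 2 : ℝ) : ℂ) = ((2 ^ (n + 1) : ℝ) : ℂ) := by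
      push_cast
      linear_combination -hb
    exact_mod_cast h2
  have hQ : (PQ n).2 = 0 := by
    by_contra hQ0
    have hQr : ((PQ n).2 : ℝ) ≠ 0 := Int.cast_ne_zero.mpr hQ0
    have hq : (((((2 : ℚ) ^ (n + 1) - (PQ n).1) / (PQ n).2 : ℚ)) : ℝ) = Real.sqrt 2 := by
      push_cast
      rw [div_eq_iff hQr]
      linear_combination -hreal
    exact irrational_sqrt_two ⟨_, hq⟩
  have hP : (PQ n).1 = 2 ^ (n + 1) := by
    rw [hQ] at hreal
    simp at hreal
    exact_mod_cast hreal
  rcases Nat.even_or_odd n with he | ho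
  · obtain ⟨k, hk⟩ := he
    obtain ⟨m, hm⟩ : ∃ m, n = 2 * m + 2 := ⟨k - 1, by omega⟩
    obtain ⟨a, b, c, d, hbod, hcod, h1, h2, h3, h4⟩ := PQ_inv m
    rw [← hm] at h3
    have hcancel : c = 2 * 2 ^ (m + 1) := by
      have h2ne : (2 : ℤ) ^ (m + 1) ≠ 0 := by positivity
      apply mul_left_cancel₀ h2ne
      rw [← h3, hP, hm]
      ring
    rw [Int.odd_iff, hcancel] at hcod
    omega
  · obtain ⟨m, hm⟩ := ho
    obtain ⟨a, b, c, d, hbod, hcod, h1, h2, h3, h4⟩ := PQ_inv m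
    rw [← hm] at h2
    rw [h2] at hQ
    have h2ne : (2 : ℤ) ^ m ≠ 0 := by positivity
    have hb0 : b = 0 := by
      rcases mul_eq_zero.mp hQ with h | h
      · exact absurd h h2ne
      · exact h
    rw [Int.odd_iff, hb0] at hbod
    omega

end
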